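/- arXiv:2401.08060 — 4 statements merged into one kernel-verified Lean document; each statement's English description precedes it below -/
import Mathlib

section
/- (Three sequences lemma) Let {α_k}, {β_k}, {γ_k} be sequences of nonnegative real numbers such that α_{k+1} - α_k ≤ β_k α_k + γ_k for all sufficiently large k, {β_k} is bounded, ∑ β_k = ∞, ∑ γ_k < ∞, and ∑ β_k α_k² < ∞. Then α_k → 0 as k → ∞. -/
/-!
If `α k ≥ ε` from some point on, then `β k ≤ β k α k² / ε²` there and `∑ β k` would converge;
so `α` drops below any `ε > 0` infinitely often. Once `α m < ε`, the recursion lets `α` grow above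
`ε (1 + M)` (where `M` bounds `β`) only through the increments `γ k + β k α k² / ε`, because
`β k α k ≤ β k α k² / ε` while `α k ≥ ε`. These increments are summable, so starting from a late
enough such `m` the sequence stays below `ε (1 + M)` plus a small tail sum.
-/

open Filter Topology

theorem frequently_lt_of_summable_mul_sq {α β : ℕ → ℝ} (hβ : ∀ k, 0 ≤ β k)
    (hβdiv : ¬ Summable β) (hβα : Summable fun k => β k * α k ^ 2) {ε : ℝ} (hε : 0 < ε) :
    ∃ᶠ k in atTop, α k < ε := by
  by_contra h
  simp only [not_frequently, not_lt] at h
  refine hβdiv (Summable.of_norm_bounded_eventually_nat (hβα.div_const (ε ^ 2)) ?_)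
  filter_upwards [h] with k hk
  rw [Real.norm_of_nonneg (hβ k), le_div_iff₀ (by positivity)]
  exact mul_le_mul_of_nonneg_left (pow_le_pow_left₀ hε.le hk 2) (hβ k)

theorem sum_Ico_le_tsum_nat_add {d : ℕ → ℝ} (hd : ∀ k, 0 ≤ d k) (hds : Summable d) (m n : ℕ) :
    ∑ k ∈ Finset.Ico m n, d k ≤ ∑' k, d (k + m) := by
  rcases le_total m n with hmn | hnm
  · rw [Finset.sum_Ico_eq_sub _ hmn]
    linarith [hds.sum_le_tsum (Finset.range n) fun k _ => hd k, hds.sum_add_tsum_nat_add m]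
  · rw [Finset.Ico_eq_empty_of_le hnm, Finset.sum_empty]
    exact tsum_nonneg fun k => hd (k + m)

theorem le_add_sum_Ico_of_le_max_add {u d : ℕ → ℝ} {b : ℝ} {m : ℕ} (hd : ∀ k, 0 ≤ d k)
    (hm : u m ≤ b) (hstep : ∀ k ≥ m, u (k + 1) ≤ max b (u k) + d k) {n : ℕ} (hn : m ≤ n) :
    u n ≤ b + ∑ k ∈ Finset.Ico m n, d k := by
  induction n, hn using Nat.le_induction with
  | base => simpa using hm
  | succ n hmn ih =>
    have hsum : 0 ≤ ∑ k ∈ Finset.Ico m n, d k := Finset.sum_nonneg fun k _ => hd k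
    rw [Finset.sum_Ico_succ_top hmn]
    linarith [hstep n hmn, max_le (le_add_of_nonneg_right hsum) ih]

theorem eventually_lt_add_of_frequently_le {u d : ℕ → ℝ} {b η : ℝ} (hd : ∀ k, 0 ≤ d k)
    (hds : Summable d) (hη : 0 < η) (hfreq : ∃ᶠ k in atTop, u k ≤ b)
    (hstep : ∀ᶠ k in atTop, u (k + 1) ≤ max b (u k) + d k) :
    ∀ᶠ n in atTop, u n < b + η := by
  obtain ⟨N, hN⟩ := eventually_atTop.1 hstep
  have htail : ∀ᶠ m in atTop, ∑' k, d (k + m) < η :=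
    (tendsto_sum_nat_add d).eventually_lt_const hη
  obtain ⟨m, hm, hNm, hmtail⟩ :=
    (hfreq.and_eventually ((eventually_ge_atTop N).and htail)).exists
  filter_upwards [eventually_ge_atTop m] with n hn
  calc u n ≤ b + ∑ k ∈ Finset.Ico m n, d k :=
        le_add_sum_Ico_of_le_max_add hd hm (fun k hk => hN k (hNm.trans hk)) hn
    _ ≤ b + ∑' k, d (k + m) := by gcongr; exact sum_Ico_le_tsum_nat_add hd hds m n
    _ < b + η := by gcongr

theorem le_max_add_of_sub_le_mul_add {a a' β γ M ε : ℝ} (hβ : 0 ≤ β) (hβM : β ≤ M)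
    (hε : 0 < ε) (h : a' - a ≤ β * a + γ) :
    a' ≤ max (ε * (1 + M)) a + (γ + β * a ^ 2 / ε) := by
  have hquad : 0 ≤ β * a ^ 2 / ε := by positivity
  rcases lt_or_ge a ε with hlt | hge
  · have : β * a ≤ M * ε := by nlinarith
    nlinarith [le_max_left (ε * (1 + M)) a]
  · have : β * a ≤ β * a ^ 2 / ε := by
      rw [le_div_iff₀ hε]
      nlinarith [mul_le_mul_of_nonneg_left hge (mul_nonneg hβ (hε.le.trans hge))]
    linarith [le_max_right (ε * (1 + M)) a]

/-- Three sequences lemma. -/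
theorem stmt_2 (α β γ : ℕ → ℝ)
    (hα : ∀ k, 0 ≤ α k) (hβ : ∀ k, 0 ≤ β k) (hγ : ∀ k, 0 ≤ γ k)
    (hrec : ∀ᶠ k in atTop, α (k + 1) - α k ≤ β k * α k + γ k)
    (hβbdd : ∃ M, ∀ k, β k ≤ M)
    (hβdiv : Tendsto (fun n => ∑ k ∈ Finset.range n, β k) atTop atTop)
    (hγsum : Summable γ)
    (hβαsum : Summable (fun k => β k * (α k) ^ 2)) :
    Tendsto α atTop (𝓝 0) := by
  obtain ⟨M, hM⟩ := hβbdd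
  have hM0 : 0 ≤ M := (hβ 0).trans (hM 0)
  have hβns : ¬ Summable β := by
    rwa [summable_iff_not_tendsto_nat_atTop_of_nonneg hβ, not_not]
  refine tendsto_order.2 ⟨fun a ha => Eventually.of_forall fun k => ha.trans_le (hα k),
    fun c hc => ?_⟩
  set ε := c / (2 * (1 + M))
  have hε : 0 < ε := by positivity
  have hb : ε * (1 + M) = c / 2 := by simp only [ε]; field_simp
  have hfreq : ∃ᶠ k in atTop, α k ≤ ε * (1 + M) :=
    (frequently_lt_of_summable_mul_sq hβ hβns hβαsum hε).mono fun k hk =>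
      hk.le.trans (le_mul_of_one_le_right hε.le (by linarith))
  have hstep : ∀ᶠ k in atTop,
      α (k + 1) ≤ max (ε * (1 + M)) (α k) + (γ k + β k * α k ^ 2 / ε) := by
    filter_upwards [hrec] with k hk
    exact le_max_add_of_sub_le_mul_add (hβ k) (hM k) hε hk
  have hd : ∀ k, 0 ≤ γ k + β k * α k ^ 2 / ε := fun k => by
    have := hγ k; have := hβ k; positivity
  filter_upwards [eventually_lt_add_of_frequently_le hd (hγsum.add (hβαsum.div_const ε))
    (half_pos hc) hfreq hstep] with n hn
  linarith
end

section
/- Let f : ℝⁿ → ℝ be differentiable satisfying the L-descent condition, and let x, g ∈ ℝⁿ, t > 0, ε ≥ 0 with ‖g - ∇f(x)‖ ≤ ε and Lt ≤ 1. Then for x⁺ = x - t g one has f(x⁺) ≤ f(x) - (t/2)(2 - Lt - ε + Ltε)‖∇f(x)‖² + tε((1 - Lt)/2 + Ltε/2). -/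
/-!
Write `G = ∇f(x)` and `e = g - G`. Expanding `‖g‖² = ‖G‖² + 2⟪G, e⟫ + ‖e‖²` in the descent
inequality at `y = x - t g` gives the exact bound
`f(x⁺) ≤ f(x) - t(1 - Lt/2)‖G‖² - t(1 - Lt)⟪G, e⟫ + (Lt²/2)‖e‖²`.
Since `Lt ≤ 1`, the cross term is controlled by Cauchy–Schwarz followed by
`‖G‖ ≤ (‖G‖² + 1)/2`, i.e. `-⟪G, e⟫ ≤ (ε/2)(‖G‖² + 1)`, and the last term by `‖e‖² ≤ ε²`.
-/

open Filter Topology RealInnerProductSpace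

section InexactStep

variable {E : Type*} [NormedAddCommGroup E] [InnerProductSpace ℝ E]

lemma inner_neg_smul_add_norm_sq_eq (G g : E) (L t : ℝ) :
    ⟪G, -(t • g)⟫ + L / 2 * ‖-(t • g)‖ ^ 2 =
      -(t * (1 - L * t / 2)) * ‖G‖ ^ 2 - t * (1 - L * t) * ⟪G, g - G⟫
        + L * t ^ 2 / 2 * ‖g - G‖ ^ 2 := by
  obtain ⟨e, rfl⟩ : ∃ e, g = G + e := ⟨g - G, by abel⟩
  rw [add_sub_cancel_left, norm_neg, norm_smul, mul_pow, Real.norm_eq_abs, sq_abs,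
    inner_neg_right, real_inner_smul_right, norm_add_sq_real, inner_add_right,
    real_inner_self_eq_norm_sq]
  ring

lemma neg_inner_sub_le_of_norm_sub_le {G g : E} {ε : ℝ} (hg : ‖g - G‖ ≤ ε) :
    -⟪G, g - G⟫ ≤ ε / 2 * (‖G‖ ^ 2 + 1) := by
  have hε : 0 ≤ ε := (norm_nonneg _).trans hg
  calc -⟪G, g - G⟫ ≤ ‖G‖ * ‖g - G‖ := (neg_le_abs _).trans (abs_real_inner_le_norm G _)
    _ ≤ ‖G‖ * ε := by gcongr
    _ ≤ ε / 2 * (‖G‖ ^ 2 + 1) := by nlinarith [sq_nonneg (‖G‖ - 1)]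

lemma inner_neg_smul_add_norm_sq_le {G g : E} {L t ε : ℝ} (hL : 0 ≤ L) (ht : 0 ≤ t)
    (hg : ‖g - G‖ ≤ ε) (hLt : L * t ≤ 1) :
    ⟪G, -(t • g)⟫ + L / 2 * ‖-(t • g)‖ ^ 2 ≤
      -(t / 2 * (2 - L * t - ε + L * t * ε) * ‖G‖ ^ 2)
        + t * ε * ((1 - L * t) / 2 + L * t * ε / 2) := by
  have hcross : t * (1 - L * t) * -⟪G, g - G⟫ ≤ t * (1 - L * t) * (ε / 2 * (‖G‖ ^ 2 + 1)) :=
    mul_le_mul_of_nonneg_left (neg_inner_sub_le_of_norm_sub_le hg)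
      (mul_nonneg ht (sub_nonneg.mpr hLt))
  have herr : L * t ^ 2 / 2 * ‖g - G‖ ^ 2 ≤ L * t ^ 2 / 2 * ε ^ 2 := by
    gcongr
  rw [inner_neg_smul_add_norm_sq_eq]
  linarith

end InexactStep

theorem stmt_7_general (n : ℕ) (f : EuclideanSpace ℝ (Fin n) → ℝ) (L : ℝ) (hL : 0 < L)
    (hdesc : ∀ x y, f y ≤ f x + ⟪gradient f x, y - x⟫ + L / 2 * ‖y - x‖ ^ 2)
    (x g : EuclideanSpace ℝ (Fin n)) (t ε : ℝ) (ht : 0 < t)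
    (hg : ‖g - gradient f x‖ ≤ ε) (hLt : L * t ≤ 1) :
    f (x - t • g) ≤ f x - t / 2 * (2 - L * t - ε + L * t * ε) * ‖gradient f x‖ ^ 2
      + t * ε * ((1 - L * t) / 2 + L * t * ε / 2) := by
  have hstep := inner_neg_smul_add_norm_sq_le hL.le ht.le hg hLt
  have hdx : x - t • g - x = -(t • g) := by abel
  have := hdesc x (x - t • g)
  rw [hdx] at this
  linarith

/-- One-step estimate for inexact gradient descent with absolute error `ε`. -/
theorem stmt_7 (n : ℕ) (f : EuclideanSpace ℝ (Fin n) → ℝ) (L : ℝ) (hL : 0 < L)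
    (hdiff : Differentiable ℝ f)
    (hdesc : ∀ x y, f y ≤ f x + ⟪gradient f x, y - x⟫ + L / 2 * ‖y - x‖ ^ 2)
    (x g : EuclideanSpace ℝ (Fin n)) (t ε : ℝ) (ht : 0 < t) (hε : 0 ≤ ε)
    (hg : ‖g - gradient f x‖ ≤ ε) (hLt : L * t ≤ 1) :
    f (x - t • g) ≤ f x - t / 2 * (2 - L * t - ε + L * t * ε) * ‖gradient f x‖ ^ 2
      + t * ε * ((1 - L * t) / 2 + L * t * ε / 2) :=
  stmt_7_general n f L hL hdesc x g t ε ht hg hLt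
end

section
/- Let f : ℝⁿ → ℝ be convex and differentiable with L-Lipschitz gradient. Let {x^k} be generated by SAM: x^{k+1} = x^k - t_k ∇f(x^k + ρ_k ∇f(x^k)/‖∇f(x^k)‖), with ∇f(x^k) ≠ 0 for all k, ∑ t_k² < ∞, ∑ t_k = ∞, sup ρ_k < ∞, and inf_k f(x^k) > -∞. Then liminf_{k→∞} ‖∇f(x^k)‖ = 0. -/
/-!
Along the SAM direction `g' = ∇f(x + ρ g/‖g‖)`, with `g = ∇f x`, monotonicity of the gradient of a
convex function gives `⟪g, g' - g⟫ ≥ 0`, and the Lipschitz bound gives `‖g' - g‖ ≤ L ρ`. Inserting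
this in the descent lemma yields `f(x⁺) ≤ f x - (t/2)‖g‖² + L³ t² ρ² / 2` once `L t ≤ 1`, which
holds eventually since `t_k → 0`. Telescoping against the lower bound of `f(x^k)` and `∑ t_k² < ∞`
shows `∑ t_k ‖∇f(x^k)‖² < ∞`; as `∑ t_k = ∞`, `‖∇f(x^k)‖` cannot stay away from `0`.
-/

open Filter Set
open scoped InnerProductSpace

lemma summable_of_succ_le_sub_add {a d e : ℕ → ℝ} (ha : BddBelow (range a))
    (hd : ∀ k, 0 ≤ d k) (he : Summable e) (he0 : ∀ k, 0 ≤ e k)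
    (h : ∀ k, a (k + 1) ≤ a k - d k + e k) : Summable d := by
  obtain ⟨b, hb⟩ := ha
  refine summable_of_sum_range_le (c := a 0 - b + ∑' k, e k) hd fun n => ?_
  have htelescope : ∑ k ∈ Finset.range n, d k ≤ a 0 - a n + ∑ k ∈ Finset.range n, e k := by
    rw [← Finset.sum_range_sub', ← Finset.sum_add_distrib]
    exact Finset.sum_le_sum fun k _ => by linarith [h k]
  linarith [hb ⟨n, rfl⟩, he.sum_le_tsum (Finset.range n) (fun k _ => he0 k)]

lemma frequently_lt_of_le_sub_mul_add {a c t e : ℕ → ℝ} {ε : ℝ} (hε : 0 < ε)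
    (ha : BddBelow (range a)) (ht : ∀ k, 0 ≤ t k) (ht1 : ¬ Summable t)
    (he : Summable e) (he0 : ∀ k, 0 ≤ e k)
    (h : ∀ᶠ k in atTop, a (k + 1) ≤ a k - t k * c k + e k) :
    ∃ᶠ k in atTop, c k < ε := by
  by_contra hfar
  simp only [not_frequently, not_lt] at hfar
  obtain ⟨M, hM⟩ := eventually_atTop.1 (hfar.and h)
  refine ht1 ((summable_nat_add_iff M).1 ((summable_mul_left_iff hε.ne').1 ?_))
  refine summable_of_succ_le_sub_add (a := fun k => a (k + M))
    (ha.mono (range_comp_subset_range (· + M) a)) (fun k => mul_nonneg hε.le (ht _))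
    ((summable_nat_add_iff M).2 he) (fun k => he0 _) fun k => ?_
  obtain ⟨hc, hstep⟩ := hM (k + M) (Nat.le_add_left M k)
  rw [show k + 1 + M = k + M + 1 by ring]
  linarith [mul_le_mul_of_nonneg_left hc (ht (k + M))]

lemma liminf_eq_zero_of_frequently_lt {ι : Type*} {l : Filter ι} {u : ι → ℝ}
    (hu : ∀ i, 0 ≤ u i) (h : ∀ ε > 0, ∃ᶠ i in l, u i < ε) : liminf u l = 0 := by
  refine le_antisymm (le_of_forall_pos_le_add fun ε hε => ?_) ?_
  · simpa using liminf_le_of_frequently_le ((h ε hε).mono fun _ => le_of_lt)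
      (isBoundedUnder_of ⟨0, hu⟩)
  · exact le_liminf_of_le
      (IsCoboundedUnder.of_frequently_le ((h 1 one_pos).mono fun _ => le_of_lt))
      (Eventually.of_forall hu)

section Gradient

variable {E : Type*} [NormedAddCommGroup E] [InnerProductSpace ℝ E] [CompleteSpace E]
  {f : E → ℝ}

lemma HasGradientAt.hasDerivAt_comp_lineMap {a y g : E} {s : ℝ}
    (hf : HasGradientAt f g (AffineMap.lineMap a y s)) :
    HasDerivAt (f ∘ AffineMap.lineMap a y) ⟪g, y - a⟫_ℝ s := by
  have := hf.hasFDerivAt.comp_hasDerivAt s AffineMap.hasDerivAt_lineMap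
  rwa [InnerProductSpace.toDual_apply_apply] at this

lemma ConvexOn.add_inner_gradient_le (hconv : ConvexOn ℝ univ f) {a : E}
    (hf : DifferentiableAt ℝ f a) (y : E) : f a + ⟪gradient f a, y - a⟫_ℝ ≤ f y := by
  have hline : ConvexOn ℝ univ (f ∘ AffineMap.lineMap (k := ℝ) a y) := hconv.comp_affineMap _
  have hderiv : HasDerivAt (f ∘ AffineMap.lineMap a y) ⟪gradient f a, y - a⟫_ℝ (0 : ℝ) :=
    HasGradientAt.hasDerivAt_comp_lineMap (by simpa using hf.hasGradientAt)
  have := hline.le_slope_of_hasDerivAt (mem_univ 0) (mem_univ 1) one_pos hderiv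
  simp only [slope_def_field, Function.comp_apply, AffineMap.lineMap_apply_zero,
    AffineMap.lineMap_apply_one, sub_zero, div_one] at this
  linarith

lemma ConvexOn.inner_gradient_sub_nonneg (hconv : ConvexOn ℝ univ f) {a b : E}
    (ha : DifferentiableAt ℝ f a) (hb : DifferentiableAt ℝ f b) :
    0 ≤ ⟪gradient f b - gradient f a, b - a⟫_ℝ := by
  have hab := hconv.add_inner_gradient_le ha b
  have hba := hconv.add_inner_gradient_le hb a
  rw [← neg_sub b a, inner_neg_right] at hba
  rw [inner_sub_left]
  linarith

lemma ConvexOn.inner_gradient_gradient_add_smul_sub_nonneg (hconv : ConvexOn ℝ univ f)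
    (hf : Differentiable ℝ f) {c : ℝ} (hc : 0 ≤ c) (a : E) :
    0 ≤ ⟪gradient f a, gradient f (a + c • gradient f a) - gradient f a⟫_ℝ := by
  rcases hc.eq_or_lt with rfl | hc
  · simp
  · have := hconv.inner_gradient_sub_nonneg (hf a) (hf (a + c • gradient f a))
    rw [add_sub_cancel_left, inner_smul_right, real_inner_comm] at this
    exact (mul_nonneg_iff_of_pos_left hc).1 this

lemma le_add_inner_gradient_add_sq (hf : Differentiable ℝ f) {L : ℝ}
    (hlip : ∀ x y, ‖gradient f x - gradient f y‖ ≤ L * ‖x - y‖) (a y : E) :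
    f y ≤ f a + ⟪gradient f a, y - a⟫_ℝ + L / 2 * ‖y - a‖ ^ 2 := by
  set ℓ := AffineMap.lineMap (k := ℝ) a y
  set φ : ℝ → ℝ := fun s =>
    (f ∘ ℓ) s - s * ⟪gradient f a, y - a⟫_ℝ - L / 2 * s ^ 2 * ‖y - a‖ ^ 2
  have hφ : ∀ s, HasDerivAt φ
      (⟪gradient f (ℓ s) - gradient f a, y - a⟫_ℝ - L * s * ‖y - a‖ ^ 2) s := by
    intro s
    refine ((((hf (ℓ s)).hasGradientAt.hasDerivAt_comp_lineMap).sub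
      ((hasDerivAt_id s).mul_const ⟪gradient f a, y - a⟫_ℝ)).sub
      (((hasDerivAt_pow 2 s).const_mul (L / 2)).mul_const (‖y - a‖ ^ 2))).congr_deriv ?_
    simp only [inner_sub_left, one_mul, Nat.cast_ofNat]
    ring
  have hanti : AntitoneOn φ (Icc 0 1) := by
    refine antitoneOn_of_hasDerivWithinAt_nonpos (convex_Icc 0 1)
      (fun s _ => (hφ s).continuousAt.continuousWithinAt) (fun s _ => (hφ s).hasDerivWithinAt)
      fun s hs => sub_nonpos.2 ?_
    rw [interior_Icc] at hs
    have hℓ : ‖ℓ s - a‖ = s * ‖y - a‖ := by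
      rw [← vsub_eq_sub, AffineMap.lineMap_vsub_left, vsub_eq_sub, norm_smul,
        Real.norm_of_nonneg hs.1.le]
    calc ⟪gradient f (ℓ s) - gradient f a, y - a⟫_ℝ
        ≤ ‖gradient f (ℓ s) - gradient f a‖ * ‖y - a‖ := real_inner_le_norm _ _
      _ ≤ L * ‖ℓ s - a‖ * ‖y - a‖ := by gcongr; exact hlip _ _
      _ = L * s * ‖y - a‖ ^ 2 := by rw [hℓ]; ring
  have := hanti (left_mem_Icc.2 zero_le_one) (right_mem_Icc.2 zero_le_one) zero_le_one
  simp only [φ, ℓ, Function.comp_apply, AffineMap.lineMap_apply_zero,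
    AffineMap.lineMap_apply_one] at this
  linarith

noncomputable def samStep (f : E → ℝ) (t ρ : ℝ) (x : E) : E :=
  x - t • gradient f (x + ρ • ‖gradient f x‖⁻¹ • gradient f x)

lemma ConvexOn.samStep_le (hconv : ConvexOn ℝ univ f) (hf : Differentiable ℝ f) {L : ℝ}
    (hL : 0 ≤ L) (hlip : ∀ x y, ‖gradient f x - gradient f y‖ ≤ L * ‖x - y‖) {t ρ : ℝ}
    (ht : 0 ≤ t) (hLt : L * t ≤ 1) (hρ : 0 ≤ ρ) (a : E) :
    f (samStep f t ρ a) ≤ f a - t / 2 * ‖gradient f a‖ ^ 2 + L ^ 3 * t ^ 2 * ρ ^ 2 / 2 := by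
  set g := gradient f a
  set c := ρ * ‖g‖⁻¹
  set δ := gradient f (a + c • g) - g
  have hc : ‖c • g‖ ≤ ρ := by
    rw [norm_smul, Real.norm_of_nonneg (by positivity), mul_assoc]
    exact mul_le_of_le_one_right hρ (inv_mul_le_one_of_le₀ le_rfl (norm_nonneg g))
  have hδ : ‖δ‖ ≤ L * ρ :=
    calc ‖δ‖ ≤ L * ‖c • g‖ := by simpa using hlip (a + c • g) a
      _ ≤ L * ρ := mul_le_mul_of_nonneg_left hc hL
  have hascent : 0 ≤ ⟪g, δ⟫_ℝ :=
    hconv.inner_gradient_gradient_add_smul_sub_nonneg hf (by positivity) a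
  have hdir : samStep f t ρ a - a = -(t • (g + δ)) := by
    simp [samStep, smul_smul, δ, g, c]
  have hdesc := le_add_inner_gradient_add_sq hf hlip a (samStep f t ρ a)
  rw [hdir, inner_neg_right, inner_smul_right, norm_neg, norm_smul, mul_pow, Real.norm_eq_abs,
    sq_abs, norm_add_sq_real, inner_add_right, real_inner_self_eq_norm_sq] at hdesc
  have h1 : 0 ≤ t * (1 - L * t) * ‖g‖ ^ 2 := by have := sub_nonneg.2 hLt; positivity
  have h2 : 0 ≤ t * (1 - L * t) * ⟪g, δ⟫_ℝ := by have := sub_nonneg.2 hLt; positivity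
  have h3 : L * t ^ 2 * ‖δ‖ ^ 2 ≤ L * t ^ 2 * (L * ρ) ^ 2 := by gcongr
  linarith

end Gradient

theorem stmt_16_general (n : ℕ) (f : EuclideanSpace ℝ (Fin n) → ℝ) (L : ℝ) (hL : 0 < L)
    (hconv : ConvexOn ℝ Set.univ f) (hdiff : Differentiable ℝ f)
    (hlip : ∀ x y, ‖gradient f x - gradient f y‖ ≤ L * ‖x - y‖)
    (t ρ : ℕ → ℝ) (ht0 : ∀ k, 0 ≤ t k) (hρ0 : ∀ k, 0 ≤ ρ k)
    (x : ℕ → EuclideanSpace ℝ (Fin n))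
    (hrec : ∀ k, x (k + 1) = x k - t k •
      gradient f (x k + ρ k • ‖gradient f (x k)‖⁻¹ • gradient f (x k)))
    (ht2 : Summable (fun k => (t k) ^ 2))
    (htdiv : Tendsto (fun N => ∑ k ∈ Finset.range N, t k) atTop atTop)
    (hρbdd : BddAbove (Set.range ρ))
    (hbelow : BddBelow (Set.range (fun k => f (x k)))) :
    liminf (fun k => ‖gradient f (x k)‖) atTop = 0 := by
  obtain ⟨R, hR⟩ := hρbdd
  have hstep_small : ∀ᶠ k in atTop, L * t k ≤ 1 := by
    filter_upwards [ht2.tendsto_atTop_zero.eventually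
      (eventually_le_nhds (by positivity : 0 < L⁻¹ ^ 2))] with k hk
    have := (pow_le_pow_iff_left₀ (ht0 k) (by positivity) two_ne_zero).1 hk
    calc L * t k ≤ L * L⁻¹ := by gcongr
      _ = 1 := mul_inv_cancel₀ hL.ne'
  have hdescent : ∀ᶠ k in atTop, f (x (k + 1)) ≤
      f (x k) - t k * (‖gradient f (x k)‖ ^ 2 / 2) + L ^ 3 * t k ^ 2 * ρ k ^ 2 / 2 := by
    filter_upwards [hstep_small] with k hk
    rw [hrec k]
    exact (hconv.samStep_le hdiff hL.le hlip (ht0 k) hk (hρ0 k) (x k)).trans_eq (by ring)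
  have herr : Summable fun k => L ^ 3 * t k ^ 2 * ρ k ^ 2 / 2 := by
    refine Summable.of_nonneg_of_le (fun k => by positivity) (fun k => ?_)
      (((ht2.mul_left (L ^ 3)).mul_right (R ^ 2)).div_const 2)
    have := hρ0 k
    gcongr
    exact hR ⟨k, rfl⟩
  refine liminf_eq_zero_of_frequently_lt (fun k => norm_nonneg _) fun ε hε => ?_
  refine (frequently_lt_of_le_sub_mul_add (by positivity : 0 < ε ^ 2 / 2) hbelow ht0
    (fun hsum => not_tendsto_atTop_of_tendsto_nhds hsum.hasSum.tendsto_sum_nat htdiv) herr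
    (fun k => by positivity) hdescent).mono fun k hk => ?_
  exact (pow_lt_pow_iff_left₀ (norm_nonneg _) hε.le two_ne_zero).1 (by linarith)

/-- Convergence of SAM for convex functions: `liminf ‖∇f(x^k)‖ = 0`. -/
theorem stmt_16 (n : ℕ) (f : EuclideanSpace ℝ (Fin n) → ℝ) (L : ℝ) (hL : 0 < L)
    (hconv : ConvexOn ℝ Set.univ f) (hdiff : Differentiable ℝ f)
    (hlip : ∀ x y, ‖gradient f x - gradient f y‖ ≤ L * ‖x - y‖)
    (t ρ : ℕ → ℝ) (ht0 : ∀ k, 0 ≤ t k) (hρ0 : ∀ k, 0 ≤ ρ k)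
    (x : ℕ → EuclideanSpace ℝ (Fin n))
    (hrec : ∀ k, x (k + 1) = x k - t k •
      gradient f (x k + ρ k • ‖gradient f (x k)‖⁻¹ • gradient f (x k)))
    (hne : ∀ k, gradient f (x k) ≠ 0)
    (ht2 : Summable (fun k => (t k) ^ 2))
    (htdiv : Tendsto (fun N => ∑ k ∈ Finset.range N, t k) atTop atTop)
    (hρbdd : BddAbove (Set.range ρ))
    (hbelow : BddBelow (Set.range (fun k => f (x k)))) :
    liminf (fun k => ‖gradient f (x k)‖) atTop = 0 :=
  stmt_16_general n f L hL hconv hdiff hlip t ρ ht0 hρ0 x hrec ht2 htdiv hρbdd hbelow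
end

section
/- Let L > 0, C ∈ (0, 2/L), p > 0, and define t_k = 1/k and ρ_k = C if k is a perfect square, ρ_k = C/k^p otherwise. Then ∑ t_k = ∞, t_k → 0 monotonically, ∑ t_k ρ_k < ∞, and limsup ρ_k = C < 2/L, while ρ_k does not converge to 0. -/
open Filter Topology Real
open scoped Classical

/-!
The sequence `ρ` equals `C` on the infinitely many perfect squares, so its limsup is `C` and it does
not tend to `0`. Still `∑ ρ_k / k < ∞`: the terms at squares `k = m²` contribute `C ∑ 1/m² < ∞`,
and the remaining terms are bounded by the convergent `p`-series `C ∑ 1/k^(1+p)`.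
-/

theorem Summable.ite_exists_eq_mul_self {α : Type*} [AddCommMonoid α] [TopologicalSpace α]
    {f : ℕ → α} (hf : Summable fun m => f (m * m)) :
    Summable fun n => if ∃ m, n = m * m then f n else 0 := by
  refine (Function.Injective.summable_iff (g := fun m => m * m)
    (fun _ _ => Nat.mul_self_inj.1) ?_).1 ?_
  · rintro n hn
    exact if_neg fun ⟨m, hm⟩ => hn ⟨m, hm.symm⟩
  · exact hf.congr fun m => (if_pos ⟨m, rfl⟩).symm

theorem summable_ite_succ_eq_mul_self_one_div :
    Summable fun k : ℕ => if ∃ m : ℕ, k + 1 = m * m then 1 / ((k : ℝ) + 1) else 0 := by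
  have hsq : Summable fun m : ℕ => 1 / ((m * m : ℕ) : ℝ) := by
    simpa [sq] using summable_one_div_nat_pow.2 one_lt_two
  refine ((summable_nat_add_iff 1).2
    (Summable.ite_exists_eq_mul_self (f := fun n : ℕ => 1 / (n : ℝ)) hsq)).congr fun k => ?_
  push_cast
  rfl

theorem frequently_atTop_succ_eq_mul_self : ∃ᶠ k in atTop, ∃ m : ℕ, k + 1 = m * m :=
  frequently_atTop.2 fun n => ⟨n * n + 2 * n, by nlinarith, n + 1, by ring⟩

theorem Filter.limsup_eq_of_eventually_le_of_frequently_ge {α ι : Type*}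
    [ConditionallyCompleteLinearOrder α] {f : Filter ι} {u : ι → α} {a : α}
    (hle : ∀ᶠ i in f, u i ≤ a) (hge : ∃ᶠ i in f, a ≤ u i) : limsup u f = a :=
  le_antisymm (limsup_le_of_le (IsCoboundedUnder.of_frequently_ge hge) hle)
    (le_limsup_of_frequently_le hge (isBoundedUnder_of_eventually_le hle))

/-- The paper's `ρ_{k+1}`: indices are shifted to start at `0`. -/
noncomputable def squareSpike (C p : ℝ) (k : ℕ) : ℝ :=
  if ∃ m : ℕ, k + 1 = m * m then C else C / ((k + 1 : ℝ) ^ p)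

section

variable {C p : ℝ} {k : ℕ}

theorem squareSpike_of_exists (h : ∃ m : ℕ, k + 1 = m * m) : squareSpike C p k = C := if_pos h

theorem squareSpike_nonneg (hC : 0 ≤ C) : 0 ≤ squareSpike C p k := by
  unfold squareSpike
  split_ifs
  · exact hC
  · positivity

theorem squareSpike_le (hC : 0 ≤ C) (hp : 0 ≤ p) : squareSpike C p k ≤ C := by
  unfold squareSpike
  split_ifs
  · exact le_rfl
  · exact div_le_self hC (one_le_rpow (le_add_of_nonneg_left k.cast_nonneg) hp)

theorem frequently_squareSpike_eq : ∃ᶠ k in atTop, squareSpike C p k = C :=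
  frequently_atTop_succ_eq_mul_self.mono fun _ => squareSpike_of_exists

theorem limsup_squareSpike (hC : 0 ≤ C) (hp : 0 ≤ p) : limsup (squareSpike C p) atTop = C :=
  limsup_eq_of_eventually_le_of_frequently_ge (.of_forall fun _ => squareSpike_le hC hp)
    (frequently_squareSpike_eq.mono fun _ => ge_of_eq)

theorem not_tendsto_squareSpike_zero (hC : 0 < C) :
    ¬ Tendsto (squareSpike C p) atTop (𝓝 0) := fun h =>
  (frequently_squareSpike_eq.and_eventually (h.eventually_lt_const hC)).exists.elim
    fun _ ⟨heq, hlt⟩ => hlt.ne heq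

theorem one_div_succ_mul_squareSpike_le (hC : 0 ≤ C) :
    1 / ((k : ℝ) + 1) * squareSpike C p k ≤
      C * (if ∃ m : ℕ, k + 1 = m * m then 1 / ((k : ℝ) + 1) else 0) +
        C * (1 / ((k : ℝ) + 1) ^ (1 + p)) := by
  have hk : (0 : ℝ) < k + 1 := by positivity
  have htail : 0 ≤ C * (1 / ((k : ℝ) + 1) ^ (1 + p)) := by positivity
  unfold squareSpike
  split_ifs
  · exact (mul_comm _ _).le.trans (le_add_of_nonneg_right htail)
  · rw [mul_zero, zero_add, rpow_add hk, rpow_one]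
    exact le_of_eq (by field_simp)

theorem summable_one_div_succ_mul_squareSpike (hC : 0 ≤ C) (hp : 0 < p) :
    Summable fun k : ℕ => 1 / ((k : ℝ) + 1) * squareSpike C p k := by
  have hpseries : Summable fun k : ℕ => 1 / ((k : ℝ) + 1) ^ (1 + p) := by
    simpa using (summable_nat_add_iff 1).2 (summable_one_div_nat_rpow.2 (by linarith))
  refine .of_nonneg_of_le (fun k => mul_nonneg (by positivity) (squareSpike_nonneg hC))
    (fun _ => one_div_succ_mul_squareSpike_le hC) ?_
  exact (summable_ite_succ_eq_mul_self_one_div.mul_left C).add (hpseries.mul_left C)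

end

theorem stmt_19_general (L C p : ℝ) (hC0 : 0 < C) (hC : C < 2 / L) (hp : 0 < p)
    (t ρ : ℕ → ℝ)
    (ht : ∀ k : ℕ, t k = 1 / (k + 1 : ℝ))
    (hρ : ∀ k : ℕ, ρ k = if ∃ m : ℕ, k + 1 = m * m then C else C / ((k + 1 : ℝ) ^ p)) :
    Tendsto (fun n => ∑ k ∈ Finset.range n, t k) atTop atTop ∧
      Antitone t ∧ Tendsto t atTop (𝓝 0) ∧
      Summable (fun k => t k * ρ k) ∧
      limsup ρ atTop = C ∧ C < 2 / L ∧
      ¬ Tendsto ρ atTop (𝓝 0) := by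
  obtain rfl : t = fun k : ℕ => 1 / ((k : ℝ) + 1) := funext ht
  obtain rfl : ρ = squareSpike C p := funext hρ
  exact ⟨tendsto_sum_range_one_div_nat_succ_atTop, fun _ _ => Nat.one_div_le_one_div,
    tendsto_one_div_add_atTop_nhds_zero_nat, summable_one_div_succ_mul_squareSpike hC0.le hp,
    limsup_squareSpike hC0.le hp.le, hC, not_tendsto_squareSpike_zero hC0⟩

/-- The parameter conditions for the general SAM framework do not force
`ρ_k → 0`: the choice `t_k = 1/k`, `ρ_k = C` on perfect squares and
`C/k^p` otherwise (indices shifted so the `k`-th term corresponds to `k+1`). -/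
theorem stmt_19 (L C p : ℝ) (hL : 0 < L) (hC0 : 0 < C) (hC : C < 2 / L) (hp : 0 < p)
    (t ρ : ℕ → ℝ)
    (ht : ∀ k : ℕ, t k = 1 / (k + 1 : ℝ))
    (hρ : ∀ k : ℕ, ρ k = if ∃ m : ℕ, k + 1 = m * m then C else C / ((k + 1 : ℝ) ^ p)) :
    Tendsto (fun n => ∑ k ∈ Finset.range n, t k) atTop atTop ∧
      Antitone t ∧ Tendsto t atTop (𝓝 0) ∧
      Summable (fun k => t k * ρ k) ∧
      limsup ρ atTop = C ∧ C < 2 / L ∧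
      ¬ Tendsto ρ atTop (𝓝 0) :=
  stmt_19_general L C p hC0 hC hp t ρ ht hρ
end
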